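/- arXiv:1105.4064 — 5 statements merged into one kernel-verified Lean document; each statement's English description precedes it below -/
import Mathlib

section
/- Suppose X and Y are transitive G-sets and Z ⊆ X × Y is a G-invariant subset. Let (x,y) ∈ Z. Then the stabilizers G_y and G_x act on Zy = {x' ∈ X : (x',y) ∈ Z} and xZ = {y' ∈ Y : (x,y') ∈ Z} respectively, and the map sending the G_y-orbit of x·a to the G_x-orbit of y·a⁻¹ (for a ∈ G with x·a ∈ Zy) is a well-defined bijection from Zy/G_y to xZ/G_x. -/
open MulAction

/-- Key orbit transfer lemma: if `a • x` and `b • x` lie in the same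
`stabilizer G y` orbit, then `a⁻¹ • y` and `b⁻¹ • y` lie in the same
`stabilizer G x` orbit. -/
lemma aux_orbit_transfer {G X Y : Type*} [Group G] [MulAction G X] [MulAction G Y]
    (x : X) (y : Y) (a b : G)
    (h : orbit (stabilizer G y) (a • x) = orbit (stabilizer G y) (b • x)) :
    orbit (stabilizer G x) (a⁻¹ • y) = orbit (stabilizer G x) (b⁻¹ • y) := by
  have hmem : a • x ∈ orbit (stabilizer G y) (b • x) := by
    rw [← h]; exact mem_orbit_self _
  obtain ⟨g, hg⟩ := hmem
  have hgX : (g : G) • (b • x) = a • x := hg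
  have hmemx : (a⁻¹ * (g : G) * b) ∈ stabilizer G x := by
    rw [mem_stabilizer_iff]
    have : (a⁻¹ * ((g : G) * b)) • x = a⁻¹ • (((g : G) * b) • x) := mul_smul _ _ _
    rw [mul_assoc, this, mul_smul, hgX, inv_smul_smul]
  apply orbit_eq_iff.mpr
  refine ⟨⟨a⁻¹ * (g : G) * b, hmemx⟩, ?_⟩
  have hgy : (g : G) • y = y := g.2
  show (a⁻¹ * (g : G) * b) • (b⁻¹ • y) = a⁻¹ • y
  rw [mul_assoc, mul_smul, mul_smul, smul_inv_smul, hgy]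

/-- The forward map of the bijection. -/
noncomputable def auxMap {G X Y : Type*} [Group G] [MulAction G X] [MulAction G Y]
    [IsPretransitive G X]
    (Z : Set (X × Y)) (hZ : ∀ g : G, ∀ z ∈ Z, g • z ∈ Z) (x : X) (y : Y)
    (u : {s : Set X // ∃ x' : X, (x', y) ∈ Z ∧ s = orbit (stabilizer G y) x'}) :
    {s : Set Y // ∃ y' : Y, (x, y') ∈ Z ∧ s = orbit (stabilizer G x) y'} := by
  refine ⟨orbit (stabilizer G x)
      ((exists_smul_eq G x u.2.choose).choose⁻¹ • y),
      (exists_smul_eq G x u.2.choose).choose⁻¹ • y, ?_, rfl⟩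
  set a := (exists_smul_eq G x u.2.choose).choose with ha
  have hax : a • x = u.2.choose := (exists_smul_eq G x u.2.choose).choose_spec
  have hxZ : (u.2.choose, y) ∈ Z := u.2.choose_spec.1
  have := hZ a⁻¹ _ hxZ
  have heq : a⁻¹ • ((u.2.choose : X), y) = (x, a⁻¹ • y) := by
    rw [Prod.smul_mk, ← hax, inv_smul_smul]
  rwa [heq] at this

/-- Characterization of `auxMap`. -/
lemma auxMap_spec {G X Y : Type*} [Group G] [MulAction G X] [MulAction G Y]
    [IsPretransitive G X]
    (Z : Set (X × Y)) (hZ : ∀ g : G, ∀ z ∈ Z, g • z ∈ Z) (x : X) (y : Y)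
    (u : {s : Set X // ∃ x' : X, (x', y) ∈ Z ∧ s = orbit (stabilizer G y) x'})
    (b : G) (hb : (u : Set X) = orbit (stabilizer G y) (b • x)) :
    (auxMap Z hZ x y u : Set Y) = orbit (stabilizer G x) (b⁻¹ • y) := by
  have hax : (exists_smul_eq G x u.2.choose).choose • x = u.2.choose :=
    (exists_smul_eq G x u.2.choose).choose_spec
  have hval : (u : Set X) = orbit (stabilizer G y) u.2.choose := u.2.choose_spec.2
  have h : orbit (stabilizer G y) ((exists_smul_eq G x u.2.choose).choose • x)
      = orbit (stabilizer G y) (b • x) := by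
    rw [hax, ← hval, hb]
  exact aux_orbit_transfer x y _ b h

theorem invariant_pairs_orbit_bijection {G X Y : Type*} [Group G] [Fintype G]
    [MulAction G X] [MulAction G Y]
    [MulAction.IsPretransitive G X] [MulAction.IsPretransitive G Y]
    (Z : Set (X × Y)) (hZ : ∀ g : G, ∀ z ∈ Z, g • z ∈ Z)
    (x : X) (y : Y) (hxy : (x, y) ∈ Z) :
    (∀ g : MulAction.stabilizer G y, ∀ x' : X, (x', y) ∈ Z → ((g : G) • x', y) ∈ Z) ∧
    (∀ g : MulAction.stabilizer G x, ∀ y' : Y, (x, y') ∈ Z → (x, (g : G) • y') ∈ Z) ∧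
    ∃ e : {s : Set X // ∃ x' : X, (x', y) ∈ Z ∧ s = MulAction.orbit (MulAction.stabilizer G y) x'}
        ≃ {s : Set Y // ∃ y' : Y, (x, y') ∈ Z ∧ s = MulAction.orbit (MulAction.stabilizer G x) y'},
      ∀ (a : G) (u : {s : Set X // ∃ x' : X, (x', y) ∈ Z ∧
          s = MulAction.orbit (MulAction.stabilizer G y) x'}),
        (u : Set X) = MulAction.orbit (MulAction.stabilizer G y) (a • x) →
        (e u : Set Y) = MulAction.orbit (MulAction.stabilizer G x) (a⁻¹ • y) := by
  refine ⟨?_, ?_, ?_⟩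
  · intro g x' hx'
    have := hZ (g : G) _ hx'
    rwa [Prod.smul_mk, g.2] at this
  · intro g y' hy'
    have := hZ (g : G) _ hy'
    rwa [Prod.smul_mk, g.2] at this
  · -- the swapped data
    set Z' : Set (Y × X) := {p | (p.2, p.1) ∈ Z} with hZ'def
    have hZ' : ∀ g : G, ∀ z ∈ Z', g • z ∈ Z' := by
      intro g z hz
      exact hZ g (z.2, z.1) hz
    -- forward and backward maps
    refine ⟨⟨auxMap Z hZ x y, auxMap Z' hZ' y x, ?_, ?_⟩, ?_⟩
    · intro u
      obtain ⟨x', hx'Z, hx'⟩ := u.2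
      obtain ⟨b, hb⟩ := exists_smul_eq G x x'
      have hbval : (u : Set X) = orbit (stabilizer G y) (b • x) := by rw [hx', hb]
      have h1 := auxMap_spec Z hZ x y u b hbval
      have h2 := auxMap_spec Z' hZ' y x (auxMap Z hZ x y u) b⁻¹ h1
      apply Subtype.ext
      rw [h2, inv_inv, ← hbval]
    · intro v
      obtain ⟨y', hy'Z, hy'⟩ := v.2
      obtain ⟨b, hb⟩ := exists_smul_eq G y y'
      have hbval : (v : Set Y) = orbit (stabilizer G x) (b • y) := by rw [hy', hb]
      have h1 := auxMap_spec Z' hZ' y x v b hbval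
      have h2 := auxMap_spec Z hZ x y (auxMap Z' hZ' y x v) b⁻¹ h1
      apply Subtype.ext
      rw [h2, inv_inv, ← hbval]
    · intro a u hu
      exact auxMap_spec Z hZ x y u a hu
end

section
/- Let G be a finite group acting on a finite set Y, let B ≤ G be a subgroup of prime index p, and let R = G \ B. Define o_G = (1/|G|) Σ_{g∈G} |Fix_Y(g)|, o_B = (1/|B|) Σ_{g∈B} |Fix_Y(g)|, and o_R = (1/|B|) Σ_{g∈R} |Fix_Y(g)|. Then o_R is an integer, o_R ≡ −o_B (mod p), and o_R ≤ (p−1)·o_B. -/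
open MulAction

theorem red_orbit_count_conditions {G Y : Type*} [Group G] [Fintype G] [Fintype Y]
    [MulAction G Y] (B : Subgroup G) [DecidablePred (· ∈ B)]
    (p : ℕ) (hp : p.Prime) (hB : B.index = p) :
    (Nat.card B ∣
      ∑ g ∈ Finset.univ.filter (fun g : G => g ∉ B), Nat.card {y : Y | g • y = y}) ∧
    ((∑ g ∈ Finset.univ.filter (fun g : G => g ∉ B), Nat.card {y : Y | g • y = y}) / Nat.card B
        + (∑ g ∈ Finset.univ.filter (fun g : G => g ∈ B), Nat.card {y : Y | g • y = y}) / Nat.card B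
      ≡ 0 [MOD p]) ∧
    (∑ g ∈ Finset.univ.filter (fun g : G => g ∉ B), Nat.card {y : Y | g • y = y}) / Nat.card B
      ≤ (p - 1) *
        ((∑ g ∈ Finset.univ.filter (fun g : G => g ∈ B), Nat.card {y : Y | g • y = y}) / Nat.card B) := by
  classical
  set nB := Nat.card B with hnB
  have hnBpos : 0 < nB := Nat.card_pos
  set oG := Fintype.card (Quotient (orbitRel G Y)) with hoG
  set oB := Fintype.card (Quotient (orbitRel B Y)) with hoB
  set SR := ∑ g ∈ Finset.univ.filter (fun g : G => g ∉ B), Nat.card {y : Y | g • y = y} with hSR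
  set SB := ∑ g ∈ Finset.univ.filter (fun g : G => g ∈ B), Nat.card {y : Y | g • y = y} with hSB
  have hfix : ∀ g : G, Nat.card {y : Y | g • y = y} = Fintype.card (fixedBy Y g) := by
    intro g
    rw [← Nat.card_eq_fintype_card]
    rfl
  have hfixB : ∀ b : B, Nat.card {y : Y | (b : G) • y = y} = Fintype.card (fixedBy Y b) := by
    intro b
    rw [← Nat.card_eq_fintype_card]
    rfl
  -- card of G
  have hcardG : Fintype.card G = nB * p := by
    rw [← hB, hnB, Subgroup.card_mul_index B, Nat.card_eq_fintype_card]
  -- Burnside for G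
  have hsplit : SR + SB = ∑ g : G, Nat.card {y : Y | g • y = y} := by
    rw [hSR, hSB, ← Finset.sum_filter_add_sum_filter_not Finset.univ
      (fun g : G => g ∉ B) (fun g => Nat.card {y : Y | g • y = y})]
    congr 2
    ext g
    simp
  have hGsum : SR + SB = oG * (nB * p) := by
    rw [hsplit, ← hcardG, hoG, ← MulAction.sum_card_fixedBy_eq_card_orbits_mul_card_group G Y]
    exact Finset.sum_congr rfl (fun g _ => hfix g)
  -- Burnside for B
  have hBsum : SB = oB * nB := by
    rw [hoB, hnB, Nat.card_eq_fintype_card,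
      ← MulAction.sum_card_fixedBy_eq_card_orbits_mul_card_group B Y, hSB]
    rw [Finset.sum_subtype (Finset.univ.filter (fun g : G => g ∈ B))
      (p := fun g : G => g ∈ B) (fun g => by simp) (fun g => Nat.card {y : Y | g • y = y})]
    exact Finset.sum_congr rfl (fun b _ => hfixB b)
  -- oG ≤ oB
  have hle : oG ≤ oB := by
    apply Fintype.card_le_of_surjective
      (Quotient.map id (fun x y h => ?_)) (fun q => ?_)
    · obtain ⟨b, hb⟩ := h
      exact ⟨(b : G), hb⟩
    · obtain ⟨y, rfl⟩ := Quotient.exists_rep q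
      exact ⟨Quotient.mk _ y, rfl⟩
  -- oB ≤ oG * p
  have hoBle : oB ≤ oG * p := by
    have h1 : oB * nB ≤ oG * (nB * p) := by
      rw [← hGsum, ← hBsum]; exact Nat.le_add_left _ _
    have h2 : oB * nB ≤ (oG * p) * nB := by
      rw [show oG * (nB * p) = (oG * p) * nB from by ring] at h1; exact h1
    exact Nat.le_of_mul_le_mul_right h2 hnBpos
  have hSReq : SR = (oG * p - oB) * nB := by
    have h1 : SR = oG * (nB * p) - SB := by omega
    rw [h1, hBsum, Nat.sub_mul, show oG * (nB * p) = oG * p * nB from by ring]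
  refine ⟨⟨oG * p - oB, by rw [hSReq]; ring⟩, ?_, ?_⟩
  all_goals
    have h1 : SR / nB = oG * p - oB := by rw [hSReq, Nat.mul_div_cancel _ hnBpos]
    have h2 : SB / nB = oB := by rw [hBsum, Nat.mul_div_cancel _ hnBpos]
    rw [h1, h2]
  · rw [Nat.sub_add_cancel hoBle]
    exact (Nat.modEq_zero_iff_dvd).2 (dvd_mul_left p oG)
  · rw [Nat.sub_le_iff_le_add]
    have h3 : (p - 1) * oB + oB = p * oB := by
      have hp1 : p - 1 + 1 = p := Nat.succ_pred_eq_of_pos hp.pos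
      calc (p - 1) * oB + oB = ((p - 1) + 1) * oB := by ring
        _ = p * oB := by rw [hp1]
    rw [h3, mul_comm p oB]
    exact Nat.mul_le_mul_right p hle
end

section
/- Let S be a finite group, K ≤ S, t ∈ S. Let C = C_S(t) act by conjugation on X(K,t) = {K' ∈ [K]_S : t ∈ K'}, and let N = N_S(K) act by conjugation on T = K ∩ [t]_S (the elements of K that are S-conjugate to t). Then the map sending the C-orbit of K^s (where t^{s⁻¹} ∈ K) to the N-orbit of t^{s⁻¹} is a well-defined bijection from X(K,t)/C to T/N. -/
/-!
Both orbit spaces are parametrised by the same double cosets (write `x^g = g x g⁻¹`).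
Every `K' ∈ X(K,t)` is `K^s` with `t^{s⁻¹} ∈ K`, and every element of `T` is such a `t^{s⁻¹}`.
The conjugates `K^s` and `K^{s'}` lie in one `C_S(t)`-orbit exactly when `s' ∈ C_S(t) s N_S(K)`,
because `K^{s'} = K^{cs}` means `(cs)⁻¹ s' ∈ N_S(K)`. Likewise `t^{s⁻¹}` and `t^{s'⁻¹}` lie in one
`N_S(K)`-orbit exactly when `s' ∈ C_S(t) s N_S(K)`, because `t^{s'⁻¹} = t^{(sn)⁻¹}` means
`s' (sn)⁻¹ ∈ C_S(t)`. So both orbit spaces are in bijection with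
`C_S(t) \ {s | t^{s⁻¹} ∈ K} / N_S(K)`.
-/

open Subgroup

noncomputable def Set.rangeEquivOfEqIff {α β γ : Type*} (f : α → β) (g : α → γ)
    (h : ∀ a b, f a = f b ↔ g a = g b) : Set.range f ≃ Set.range g :=
  (Setoid.quotientKerEquivRange f).symm.trans
    ((Quotient.congrRight h).trans (Setoid.quotientKerEquivRange g))

theorem Set.rangeEquivOfEqIff_apply {α β γ : Type*} (f : α → β) (g : α → γ)
    (h : ∀ a b, f a = f b ↔ g a = g b) (a : α) :
    Set.rangeEquivOfEqIff f g h ⟨f a, Set.mem_range_self a⟩ = ⟨g a, Set.mem_range_self a⟩ := by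
  have hsymm : (Setoid.quotientKerEquivRange f).symm ⟨f a, Set.mem_range_self a⟩ = ⟦a⟧ :=
    (Equiv.symm_apply_eq _).2 rfl
  rw [Set.rangeEquivOfEqIff, Equiv.trans_apply, Equiv.trans_apply, hsymm]
  rfl

namespace Subgroup

variable {G : Type*} [Group G]

theorem mem_map_conj_iff {K : Subgroup G} {a x : G} :
    x ∈ K.map (MulAut.conj a).toMonoidHom ↔ a⁻¹ * x * a ∈ K := by
  rw [mem_map_equiv, MulAut.conj_symm_apply]

theorem map_conj_mul (K : Subgroup G) (a b : G) :
    K.map (MulAut.conj (a * b)).toMonoidHom =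
      (K.map (MulAut.conj b).toMonoidHom).map (MulAut.conj a).toMonoidHom := by
  rw [map_map, map_mul]
  rfl

theorem map_conj_eq_map_conj_iff {K : Subgroup G} {a b : G} :
    K.map (MulAut.conj a).toMonoidHom = K.map (MulAut.conj b).toMonoidHom ↔
      a⁻¹ * b ∈ normalizer (K : Set G) := by
  rw [mem_normalizer_iff_map_conj_eq, ← MulEquiv.toMonoidHom_eq_coe, map_conj_mul,
    ← (map_injective (f := (MulAut.conj a⁻¹).toMonoidHom) (MulAut.conj a⁻¹).injective).eq_iff,
    ← map_conj_mul, inv_mul_cancel, map_one, eq_comm]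
  exact Iff.of_eq (congrArg (_ = ·) K.map_id)

theorem mem_map_conj_of_mem_centralizer {L : Subgroup G} {t c : G}
    (hc : c ∈ centralizer {t}) (ht : t ∈ L) : t ∈ L.map (MulAut.conj c).toMonoidHom := by
  rwa [mem_map_conj_iff, mul_assoc, ← mem_centralizer_singleton_iff.1 hc, inv_mul_cancel_left]

theorem conj_eq_conj_iff_mul_inv_mem_centralizer {t a b : G} :
    a⁻¹ * t * a = b⁻¹ * t * b ↔ a * b⁻¹ ∈ centralizer {t} := by
  calc a⁻¹ * t * a = b⁻¹ * t * b
        ↔ a * (a⁻¹ * t * a) * b⁻¹ = a * (b⁻¹ * t * b) * b⁻¹ := by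
          rw [mul_right_cancel_iff, mul_left_cancel_iff]
    _ ↔ t * (a * b⁻¹) = a * b⁻¹ * t := by
          rw [show a * (a⁻¹ * t * a) * b⁻¹ = t * (a * b⁻¹) by group,
            show a * (b⁻¹ * t * b) * b⁻¹ = a * b⁻¹ * t by group]
    _ ↔ a * b⁻¹ ∈ centralizer {t} := by rw [mem_centralizer_singleton_iff, eq_comm]

def subgroupConjOrbit (H L : Subgroup G) : Set (Subgroup G) :=
  {L' | ∃ c ∈ H, L' = L.map (MulAut.conj c).toMonoidHom}

def conjOrbit (H : Subgroup G) (x : G) : Set G :=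
  {y | ∃ n ∈ H, y = n⁻¹ * x * n}

theorem mem_subgroupConjOrbit {H L L' : Subgroup G} :
    L' ∈ subgroupConjOrbit H L ↔ ∃ c ∈ H, L' = L.map (MulAut.conj c).toMonoidHom :=
  Iff.rfl

theorem mem_conjOrbit {H : Subgroup G} {x y : G} : y ∈ conjOrbit H x ↔ ∃ n ∈ H, y = n⁻¹ * x * n :=
  Iff.rfl

theorem subgroupConjOrbit_eq_iff {H L L' : Subgroup G} :
    subgroupConjOrbit H L = subgroupConjOrbit H L' ↔ L' ∈ subgroupConjOrbit H L := by
  constructor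
  · intro h
    rw [h]
    exact ⟨1, H.one_mem, by rw [map_one]; exact L'.map_id.symm⟩
  · rintro ⟨c, hc, rfl⟩
    ext M
    constructor
    · rintro ⟨d, hd, rfl⟩
      refine ⟨d * c⁻¹, mul_mem hd (inv_mem hc), ?_⟩
      rw [← map_conj_mul, inv_mul_cancel_right]
    · rintro ⟨d, hd, rfl⟩
      exact ⟨d * c, mul_mem hd hc, (map_conj_mul L d c).symm⟩

theorem conjOrbit_eq_iff {H : Subgroup G} {x y : G} :
    conjOrbit H x = conjOrbit H y ↔ y ∈ conjOrbit H x := by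
  constructor
  · intro h
    rw [h]
    exact ⟨1, H.one_mem, by group⟩
  · rintro ⟨n, hn, rfl⟩
    ext z
    constructor
    · rintro ⟨m, hm, rfl⟩
      exact ⟨n⁻¹ * m, mul_mem (inv_mem hn) hm, by group⟩
    · rintro ⟨m, hm, rfl⟩
      exact ⟨n * m, mul_mem hn hm, by group⟩

theorem subgroupConjOrbit_centralizer_map_conj_eq_iff (K : Subgroup G) (t s s' : G) :
    subgroupConjOrbit (centralizer {t}) (K.map (MulAut.conj s).toMonoidHom) =
        subgroupConjOrbit (centralizer {t}) (K.map (MulAut.conj s').toMonoidHom) ↔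
      DoubleCoset.mk (centralizer {t}) (normalizer (K : Set G)) s =
        DoubleCoset.mk (centralizer {t}) (normalizer (K : Set G)) s' := by
  rw [subgroupConjOrbit_eq_iff, mem_subgroupConjOrbit, DoubleCoset.eq]
  refine exists_congr fun c => and_congr_right fun _ => ?_
  rw [← map_conj_mul, eq_comm, map_conj_eq_map_conj_iff]
  exact ⟨fun hn => ⟨_, hn, by group⟩, by rintro ⟨n, hn, rfl⟩; simpa [mul_assoc] using hn⟩

theorem conjOrbit_normalizer_conj_eq_iff (K : Subgroup G) (t s s' : G) :
    conjOrbit (normalizer (K : Set G)) (s⁻¹ * t * s) =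
        conjOrbit (normalizer (K : Set G)) (s'⁻¹ * t * s') ↔
      DoubleCoset.mk (centralizer {t}) (normalizer (K : Set G)) s =
        DoubleCoset.mk (centralizer {t}) (normalizer (K : Set G)) s' := by
  rw [conjOrbit_eq_iff, mem_conjOrbit, DoubleCoset.eq]
  constructor
  · rintro ⟨n, hn, hconj⟩
    rw [show n⁻¹ * (s⁻¹ * t * s) * n = (s * n)⁻¹ * t * (s * n) by group,
      conj_eq_conj_iff_mul_inv_mem_centralizer] at hconj
    exact ⟨_, hconj, n, hn, by group⟩
  · rintro ⟨c, hc, n, hn, rfl⟩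
    refine ⟨n, hn, ?_⟩
    rw [show n⁻¹ * (s⁻¹ * t * s) * n = (s * n)⁻¹ * t * (s * n) by group,
      conj_eq_conj_iff_mul_inv_mem_centralizer]
    simpa [mul_assoc] using hc

theorem mem_range_subgroupConjOrbit_iff (K : Subgroup G) (t : G) (O : Set (Subgroup G)) :
    O ∈ Set.range (fun s : {s : G // s⁻¹ * t * s ∈ K} =>
        subgroupConjOrbit (centralizer {t}) (K.map (MulAut.conj s.1).toMonoidHom)) ↔
      ∃ K' : Subgroup G, ((∃ s : G, K' = K.map (MulAut.conj s).toMonoidHom) ∧ t ∈ K') ∧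
        O = subgroupConjOrbit (centralizer {t}) K' := by
  constructor
  · rintro ⟨⟨s, hs⟩, rfl⟩
    exact ⟨_, ⟨⟨s, rfl⟩, mem_map_conj_iff.2 hs⟩, rfl⟩
  · rintro ⟨_, ⟨⟨s, rfl⟩, ht⟩, rfl⟩
    exact ⟨⟨s, mem_map_conj_iff.1 ht⟩, rfl⟩

theorem mem_range_conjOrbit_iff (K : Subgroup G) (t : G) (O : Set G) :
    O ∈ Set.range (fun s : {s : G // s⁻¹ * t * s ∈ K} =>
        conjOrbit (normalizer (K : Set G)) (s.1⁻¹ * t * s.1)) ↔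
      ∃ t' : G, (t' ∈ K ∧ ∃ s : G, t' = s⁻¹ * t * s) ∧
        O = conjOrbit (normalizer (K : Set G)) t' := by
  constructor
  · rintro ⟨⟨s, hs⟩, rfl⟩
    exact ⟨_, ⟨hs, s, rfl⟩, rfl⟩
  · rintro ⟨_, ⟨hs, s, rfl⟩, rfl⟩
    exact ⟨⟨s, hs⟩, rfl⟩

end Subgroup

theorem XKt_orbit_bijection_general {S : Type*} [Group S] (K : Subgroup S) (t : S) :
    (∀ c ∈ Subgroup.centralizer {t}, ∀ K' : Subgroup S,
      ((∃ s : S, K' = Subgroup.map (MulAut.conj s).toMonoidHom K) ∧ t ∈ K') →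
      ((∃ s : S, Subgroup.map (MulAut.conj c).toMonoidHom K' =
          Subgroup.map (MulAut.conj s).toMonoidHom K) ∧
        t ∈ Subgroup.map (MulAut.conj c).toMonoidHom K')) ∧
    (∀ n ∈ Subgroup.normalizer (K : Set S), ∀ t' : S,
      (t' ∈ K ∧ ∃ s : S, t' = s⁻¹ * t * s) →
      (n⁻¹ * t' * n ∈ K ∧ ∃ s : S, n⁻¹ * t' * n = s⁻¹ * t * s)) ∧
    ∃ e : {O : Set (Subgroup S) // ∃ K' : Subgroup S,
          ((∃ s : S, K' = Subgroup.map (MulAut.conj s).toMonoidHom K) ∧ t ∈ K') ∧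
          O = {K'' : Subgroup S | ∃ c ∈ Subgroup.centralizer {t},
            K'' = Subgroup.map (MulAut.conj c).toMonoidHom K'}} ≃
        {O : Set S // ∃ t' : S, (t' ∈ K ∧ ∃ s : S, t' = s⁻¹ * t * s) ∧
          O = {t'' : S | ∃ n ∈ Subgroup.normalizer (K : Set S), t'' = n⁻¹ * t' * n}},
      ∀ (s : S) (_ : s⁻¹ * t * s ∈ K)
        (u : {O : Set (Subgroup S) // ∃ K' : Subgroup S,
          ((∃ s' : S, K' = Subgroup.map (MulAut.conj s').toMonoidHom K) ∧ t ∈ K') ∧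
          O = {K'' : Subgroup S | ∃ c ∈ Subgroup.centralizer {t},
            K'' = Subgroup.map (MulAut.conj c).toMonoidHom K'}}),
        (u : Set (Subgroup S)) = {K'' : Subgroup S | ∃ c ∈ Subgroup.centralizer {t},
            K'' = Subgroup.map (MulAut.conj c).toMonoidHom
              (Subgroup.map (MulAut.conj s).toMonoidHom K)} →
        (e u : Set S) = {t'' : S | ∃ n ∈ Subgroup.normalizer (K : Set S), t'' = n⁻¹ * (s⁻¹ * t * s) * n} := by
  refine ⟨?_, ?_, ?_⟩
  · rintro c hc K' ⟨⟨s, rfl⟩, ht⟩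
    exact ⟨⟨c * s, (map_conj_mul K c s).symm⟩, mem_map_conj_of_mem_centralizer hc ht⟩
  · rintro n hn t' ⟨ht', s, rfl⟩
    exact ⟨(mem_normalizer_iff''.1 hn _).1 ht', s * n, by group⟩
  · let f := fun s : {s : S // s⁻¹ * t * s ∈ K} =>
      subgroupConjOrbit (centralizer {t}) (K.map (MulAut.conj s.1).toMonoidHom)
    let g := fun s : {s : S // s⁻¹ * t * s ∈ K} =>
      conjOrbit (normalizer (K : Set S)) (s.1⁻¹ * t * s.1)
    have hfg : ∀ a b, f a = f b ↔ g a = g b := fun a b =>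
      (subgroupConjOrbit_centralizer_map_conj_eq_iff K t a b).trans
        (conjOrbit_normalizer_conj_eq_iff K t a b).symm
    let eX := Equiv.subtypeEquivRight fun O => (mem_range_subgroupConjOrbit_iff K t O).symm
    let eT := Equiv.subtypeEquivRight fun O => (mem_range_conjOrbit_iff K t O).symm
    refine ⟨eX.trans ((Set.rangeEquivOfEqIff f g hfg).trans eT.symm), fun s hs u hu => ?_⟩
    have heX : eX u = ⟨f ⟨s, hs⟩, Set.mem_range_self _⟩ := Subtype.ext hu
    change (eT.symm (Set.rangeEquivOfEqIff f g hfg (eX u)) : Set S) = _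
    rw [heX, Set.rangeEquivOfEqIff_apply]
    rfl

theorem XKt_orbit_bijection {S : Type*} [Group S] [Finite S] (K : Subgroup S) (t : S) :
    (∀ c ∈ Subgroup.centralizer {t}, ∀ K' : Subgroup S,
      ((∃ s : S, K' = Subgroup.map (MulAut.conj s).toMonoidHom K) ∧ t ∈ K') →
      ((∃ s : S, Subgroup.map (MulAut.conj c).toMonoidHom K' =
          Subgroup.map (MulAut.conj s).toMonoidHom K) ∧
        t ∈ Subgroup.map (MulAut.conj c).toMonoidHom K')) ∧
    (∀ n ∈ Subgroup.normalizer (K : Set S), ∀ t' : S,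
      (t' ∈ K ∧ ∃ s : S, t' = s⁻¹ * t * s) →
      (n⁻¹ * t' * n ∈ K ∧ ∃ s : S, n⁻¹ * t' * n = s⁻¹ * t * s)) ∧
    ∃ e : {O : Set (Subgroup S) // ∃ K' : Subgroup S,
          ((∃ s : S, K' = Subgroup.map (MulAut.conj s).toMonoidHom K) ∧ t ∈ K') ∧
          O = {K'' : Subgroup S | ∃ c ∈ Subgroup.centralizer {t},
            K'' = Subgroup.map (MulAut.conj c).toMonoidHom K'}} ≃
        {O : Set S // ∃ t' : S, (t' ∈ K ∧ ∃ s : S, t' = s⁻¹ * t * s) ∧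
          O = {t'' : S | ∃ n ∈ Subgroup.normalizer (K : Set S), t'' = n⁻¹ * t' * n}},
      ∀ (s : S) (_ : s⁻¹ * t * s ∈ K)
        (u : {O : Set (Subgroup S) // ∃ K' : Subgroup S,
          ((∃ s' : S, K' = Subgroup.map (MulAut.conj s').toMonoidHom K) ∧ t ∈ K') ∧
          O = {K'' : Subgroup S | ∃ c ∈ Subgroup.centralizer {t},
            K'' = Subgroup.map (MulAut.conj c).toMonoidHom K'}}),
        (u : Set (Subgroup S)) = {K'' : Subgroup S | ∃ c ∈ Subgroup.centralizer {t},
            K'' = Subgroup.map (MulAut.conj c).toMonoidHom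
              (Subgroup.map (MulAut.conj s).toMonoidHom K)} →
        (e u : Set S) = {t'' : S | ∃ n ∈ Subgroup.normalizer (K : Set S), t'' = n⁻¹ * (s⁻¹ * t * s) * n} :=
  XKt_orbit_bijection_general K t
end

section
/- Let A be a normal subgroup of prime index p in a finite group S, H ≤ A, and t ∈ S \ A with H^t = H (choosing t normalizing H). Writing H_j = H^{t^j} for j = 0, …, p−1, for any subgroups H, U ≤ A the mark satisfies β_{S/H}(U) = Σ_{j=0}^{p−1} β_{A/H_j}(U). In particular, if the S-conjugacy class of H equals its A-conjugacy class, then β_{S/H}(U) = p · β_{A/H}(U). -/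
theorem blue_on_blue_marks {S : Type*} [Group S] [Finite S]
    (A : Subgroup S) [A.Normal] (p : ℕ) (hp : p.Prime) (hA : A.index = p)
    (H U : Subgroup S) (hH : H ≤ A) (hU : U ≤ A)
    (t : S) (ht : t ∉ A) (htH : Subgroup.map (MulAut.conj t).toMonoidHom H = H) :
    (Nat.card {x : S ⧸ H | ∀ u ∈ U, u • x = x} =
      ∑ j ∈ Finset.range p,
        Nat.card {x : A ⧸ (Subgroup.map (MulAut.conj (t ^ j)).toMonoidHom H).subgroupOf A |
          ∀ u : S, ∀ _ : u ∈ U, ∀ huA : u ∈ A, (⟨u, huA⟩ : A) • x = x}) ∧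
    (({K : Subgroup S | ∃ s : S, K = Subgroup.map (MulAut.conj s).toMonoidHom H} =
        {K : Subgroup S | ∃ a ∈ A, K = Subgroup.map (MulAut.conj a).toMonoidHom H}) →
      Nat.card {x : S ⧸ H | ∀ u ∈ U, u • x = x} =
        p * Nat.card {x : A ⧸ H.subgroupOf A |
          ∀ u : S, ∀ _ : u ∈ U, ∀ huA : u ∈ A, (⟨u, huA⟩ : A) • x = x}) := by
  -- conjugation by t preserves H, both directions
  have hmem1 : ∀ x : S, t * x * t⁻¹ ∈ H ↔ x ∈ H := by
    intro x
    constructor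
    · intro hx
      rw [← htH] at hx
      obtain ⟨h, hh, heq⟩ := hx
      simp only [MulEquiv.coe_toMonoidHom, MulAut.conj_apply] at heq
      have : h = x := by
        have := heq
        exact mul_left_cancel (mul_right_cancel this)
      rwa [← this]
    · intro hx
      rw [← htH]
      exact ⟨x, hx, rfl⟩
  have hmemj : ∀ j : ℕ, ∀ x : S, t ^ j * x * (t ^ j)⁻¹ ∈ H ↔ x ∈ H := by
    intro j
    induction j with
    | zero => intro x; simp
    | succ n ih =>
      intro x
      have e : t ^ (n + 1) * x * (t ^ (n + 1))⁻¹
          = t ^ n * (t * x * t⁻¹) * (t ^ n)⁻¹ := by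
        rw [pow_succ']; group
      rw [e, ih, hmem1]
  have hmemj' : ∀ j : ℕ, ∀ x : S, (t ^ j)⁻¹ * x * t ^ j ∈ H ↔ x ∈ H := by
    intro j x
    have := hmemj j ((t ^ j)⁻¹ * x * t ^ j)
    rw [show t ^ j * ((t ^ j)⁻¹ * x * t ^ j) * (t ^ j)⁻¹ = x by group] at this
    exact this.symm
  have hmap : ∀ j : ℕ,
      Subgroup.map (MulAut.conj (t ^ j)).toMonoidHom H = H := by
    intro j
    ext x
    simp only [Subgroup.mem_map, MulEquiv.coe_toMonoidHom, MulAut.conj_apply]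
    constructor
    · rintro ⟨h, hh, rfl⟩
      exact (hmemj j h).mpr hh
    · intro hx
      exact ⟨(t ^ j)⁻¹ * x * t ^ j, (hmemj' j x).mpr hx, by group⟩
  -- the two fixed point sets
  set FixS := {x : S ⧸ H | ∀ u ∈ U, u • x = x} with hFixS
  set FixA := {x : A ⧸ H.subgroupOf A |
      ∀ u : S, ∀ _ : u ∈ U, ∀ huA : u ∈ A, (⟨u, huA⟩ : A) • x = x} with hFixA
  -- order of t in S/A is p
  have hcardQ : Nat.card (S ⧸ (A : Subgroup S)) = p := hA ▸ rfl
  have htau : orderOf ((t : S) : S ⧸ (A : Subgroup S)) = p := by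
    have hne : ((t : S) : S ⧸ (A : Subgroup S)) ≠ 1 := by
      simpa [QuotientGroup.eq_one_iff] using ht
    have hdvd : orderOf ((t : S) : S ⧸ (A : Subgroup S)) ∣ p := by
      rw [← hcardQ]; exact orderOf_dvd_natCard _
    rcases (Nat.Prime.eq_one_or_self_of_dvd hp _ hdvd) with h1 | h1
    · exact absurd (orderOf_eq_one_iff.mp h1) hne
    · exact h1
  -- the map
  have hwd : ∀ j : ℕ, ∀ a b : A,
      @Setoid.r _ (QuotientGroup.leftRel (H.subgroupOf A)) a b →
      @Setoid.r _ (QuotientGroup.leftRel H) ((a : S) * t ^ j) ((b : S) * t ^ j) := by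
    intro j a b hab
    rw [QuotientGroup.leftRel_apply] at hab ⊢
    rw [Subgroup.mem_subgroupOf] at hab
    have e : ((a : S) * t ^ j)⁻¹ * ((b : S) * t ^ j)
        = (t ^ j)⁻¹ * ((a : S)⁻¹ * b) * t ^ j := by group
    rw [e, hmemj']
    exact hab
  let φ : ℕ → A ⧸ H.subgroupOf A → S ⧸ H := fun j =>
    Quotient.map' (fun a : A => (a : S) * t ^ j) (hwd j)
  have hφmk : ∀ j : ℕ, ∀ a : A, φ j (a : A ⧸ H.subgroupOf A)
      = (((a : S) * t ^ j : S) : S ⧸ H) := fun _ _ => rfl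
  -- key cardinality identity
  have key : Nat.card FixS = Nat.card FixA * p := by
    have hFdef : ∀ (x : A ⧸ H.subgroupOf A), x ∈ FixA → ∀ j : ℕ, φ j x ∈ FixS := by
      intro x hx j
      obtain ⟨a, rfl⟩ := QuotientGroup.mk_surjective x
      intro u hu
      have hx' := hx u hu (hU hu)
      rw [hφmk]
      rw [MulAction.Quotient.smul_coe, smul_eq_mul, QuotientGroup.eq]
      rw [MulAction.Quotient.smul_coe, smul_eq_mul, QuotientGroup.eq,
        Subgroup.mem_subgroupOf] at hx'
      have hx'' : (a : S)⁻¹ * u⁻¹ * (a : S) ∈ H := by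
        simpa using hx'
      have e : (u * ((a : S) * t ^ j))⁻¹ * ((a : S) * t ^ j)
          = (t ^ j)⁻¹ * ((a : S)⁻¹ * u⁻¹ * a) * t ^ j := by group
      rw [e, hmemj']
      exact hx''
    let F : FixA × Fin p → FixS := fun z => ⟨φ z.2.1 z.1.1, hFdef z.1.1 z.1.2 z.2.1⟩
    have hinj : Function.Injective F := by
      rintro ⟨⟨x, hx⟩, j, hj⟩ ⟨⟨y, hy⟩, k, hk⟩ hFeq
      obtain ⟨a, rfl⟩ := QuotientGroup.mk_surjective x
      obtain ⟨b, rfl⟩ := QuotientGroup.mk_surjective y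
      have heq : (((a : S) * t ^ j : S) : S ⧸ H) = (((b : S) * t ^ k : S) : S ⧸ H) :=
        congrArg Subtype.val hFeq
      -- project to S/A to get j = k
      have hpow : (((t : S) : S ⧸ (A : Subgroup S))) ^ j
          = (((t : S) : S ⧸ (A : Subgroup S))) ^ k := by
        have hQA : (((a : S) * t ^ j : S) : S ⧸ (A : Subgroup S))
            = (((b : S) * t ^ k : S) : S ⧸ (A : Subgroup S)) := by
          rw [QuotientGroup.eq] at heq ⊢
          exact hH heq
        have ha1 : (((a : S)) : S ⧸ (A : Subgroup S)) = 1 :=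
          (QuotientGroup.eq_one_iff _).mpr a.2
        have hb1 : (((b : S)) : S ⧸ (A : Subgroup S)) = 1 :=
          (QuotientGroup.eq_one_iff _).mpr b.2
        rw [QuotientGroup.mk_mul, QuotientGroup.mk_mul, ha1, hb1, one_mul, one_mul,
          QuotientGroup.mk_pow, QuotientGroup.mk_pow] at hQA
        exact hQA
      have hjk : j = k := by
        have := pow_inj_mod.mp hpow
        rw [htau, Nat.mod_eq_of_lt hj, Nat.mod_eq_of_lt hk] at this
        exact this
      subst hjk
      have hab : ((a : A ⧸ H.subgroupOf A)) = ((b : A ⧸ H.subgroupOf A)) := by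
        rw [QuotientGroup.eq] at heq ⊢
        rw [Subgroup.mem_subgroupOf]
        have e : ((a : S) * t ^ j)⁻¹ * ((b : S) * t ^ j)
            = (t ^ j)⁻¹ * ((a : S)⁻¹ * b) * t ^ j := by group
        rw [e, hmemj'] at heq
        exact heq
      simp only [Prod.mk.injEq, Subtype.mk.injEq]
      exact ⟨hab, trivial⟩
    have hsurj : Function.Surjective F := by
      rintro ⟨x, hx⟩
      obtain ⟨s, rfl⟩ := QuotientGroup.mk_surjective x
      -- find j with t^j ≡ s mod A
      have htop : Subgroup.zpowers ((t : S) : S ⧸ (A : Subgroup S)) = ⊤ := by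
        apply Subgroup.eq_top_of_card_eq
        rw [Nat.card_zpowers, htau, hcardQ]
      have hmemz : ((s : S) : S ⧸ (A : Subgroup S)) ∈
          Subgroup.zpowers ((t : S) : S ⧸ (A : Subgroup S)) := by
        rw [htop]; trivial
      rw [← mem_powers_iff_mem_zpowers, Submonoid.mem_powers_iff] at hmemz
      obtain ⟨n, hn⟩ := hmemz
      have hppos : 0 < p := hp.pos
      set j := n % p with hjdef
      have hj : j < p := Nat.mod_lt _ hppos
      have htj : (((t ^ j : S)) : S ⧸ (A : Subgroup S)) = ((s : S) : S ⧸ (A : Subgroup S)) := by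
        rw [QuotientGroup.mk_pow]
        rw [← hn, hjdef, ← htau]
        exact pow_mod_orderOf _ _
      have hsa : s * (t ^ j)⁻¹ ∈ A := by
        have h1 : (t ^ j)⁻¹ * s ∈ A := by
          rw [← QuotientGroup.eq]
          exact htj
        have h2 := ‹A.Normal›.conj_mem _ h1 s
        have e : s * ((t ^ j)⁻¹ * s) * s⁻¹ = s * (t ^ j)⁻¹ := by group
        rwa [e] at h2
      set a : A := ⟨s * (t ^ j)⁻¹, hsa⟩ with hadef
      have haFix : ((a : A ⧸ H.subgroupOf A)) ∈ FixA := by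
        intro u hu huA
        have hx' := hx u hu
        rw [MulAction.Quotient.smul_coe, smul_eq_mul, QuotientGroup.eq] at hx'
        rw [MulAction.Quotient.smul_coe, smul_eq_mul, QuotientGroup.eq,
          Subgroup.mem_subgroupOf]
        show (((⟨u, huA⟩ : A) * a : A) : S)⁻¹ * (a : S) ∈ H
        have e2 : (((⟨u, huA⟩ : A) * a : A) : S)⁻¹ * (a : S)
            = t ^ j * ((u * s)⁻¹ * s) * (t ^ j)⁻¹ := by
          simp only [Subgroup.coe_mul, hadef]
          group
        rw [e2, hmemj]
        exact hx'
      refine ⟨⟨⟨(a : A ⧸ H.subgroupOf A), haFix⟩, ⟨j, hj⟩⟩, ?_⟩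
      apply Subtype.ext
      show φ j (a : A ⧸ H.subgroupOf A) = ((s : S) : S ⧸ H)
      rw [hφmk]
      congr 1
      simp [hadef]
    have hcard := Nat.card_eq_of_bijective F ⟨hinj, hsurj⟩
    rw [← hcard, Nat.card_prod]
    congr 1
    simp [Nat.card_eq_fintype_card]
  constructor
  · have hsum : ∀ j ∈ Finset.range p,
        Nat.card {x : A ⧸ (Subgroup.map (MulAut.conj (t ^ j)).toMonoidHom H).subgroupOf A |
          ∀ u : S, ∀ _ : u ∈ U, ∀ huA : u ∈ A, (⟨u, huA⟩ : A) • x = x} = Nat.card FixA := by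
      intro j _
      rw [hmap j]
    rw [Finset.sum_congr rfl hsum, Finset.sum_const, Finset.card_range, smul_eq_mul,
      key, mul_comm]
  · intro _
    rw [key, mul_comm]
end

section
/- Let G be a finite group and X, Y finite G-sets. If for every subgroup H ≤ G the number of points of X fixed by H equals the number of points of Y fixed by H, then X and Y are isomorphic as G-sets (i.e., there is a G-equivariant bijection X → Y). -/
/-!
Choose `x ∈ X` whose stabilizer is maximal among stabilizers of points of `X`. Equal marks at
`stabilizer G x` give `y ∈ Y` with `stabilizer G x ≤ stabilizer G y`, and equal marks at
`stabilizer G y` give `x' ∈ X` with `stabilizer G y ≤ stabilizer G x'`; maximality forces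
`stabilizer G x = stabilizer G y`, so the orbits of `x` and `y` are both isomorphic to
`G ⧸ stabilizer G x`. Marks are additive over an orbit and its complement, so the complements
again have equal marks, and induction on `Nat.card X` finishes the proof.
-/

namespace MulAction

variable (G : Type*) [Group G]

noncomputable def mark (X : Type*) [MulAction G X] (H : Subgroup G) : ℕ :=
  Nat.card {x : X | ∀ g ∈ H, g • x = x}

def Isomorphic (X Y : Type*) [MulAction G X] [MulAction G Y] : Prop :=
  ∃ e : X ≃ Y, ∀ (g : G) (x : X), e (g • x) = g • e x

variable {G} {X Y Z X' Y' : Type*} [MulAction G X] [MulAction G Y] [MulAction G Z]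
  [MulAction G X'] [MulAction G Y']

namespace Isomorphic

theorem of_isEmpty [IsEmpty X] [IsEmpty Y] : Isomorphic G X Y :=
  ⟨Equiv.equivOfIsEmpty X Y, fun _ x => isEmptyElim x⟩

theorem symm : Isomorphic G X Y → Isomorphic G Y X := by
  rintro ⟨e, he⟩
  exact ⟨e.symm, fun g y => e.symm_apply_eq.mpr (by rw [he, e.apply_symm_apply])⟩

theorem trans : Isomorphic G X Y → Isomorphic G Y Z → Isomorphic G X Z := by
  rintro ⟨e, he⟩ ⟨f, hf⟩
  exact ⟨e.trans f, fun g x => by simp only [Equiv.trans_apply, he, hf]⟩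

theorem sum : Isomorphic G X X' → Isomorphic G Y Y' → Isomorphic G (X ⊕ Y) (X' ⊕ Y') := by
  rintro ⟨e, he⟩ ⟨f, hf⟩
  refine ⟨e.sumCongr f, fun g => ?_⟩
  rintro (x | y)
  · simp only [Sum.smul_inl, Equiv.sumCongr_apply, Sum.map_inl, he]
  · simp only [Sum.smul_inr, Equiv.sumCongr_apply, Sum.map_inr, hf]

theorem mark_eq : Isomorphic G X Y → ∀ H, mark G X H = mark G Y H := by
  rintro ⟨e, he⟩ H
  refine Nat.card_congr (e.subtypeEquiv fun x => ?_)
  simp only [Set.mem_ofPred_eq, ← he, e.apply_eq_iff_eq]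

end Isomorphic

theorem mark_bot : mark G X ⊥ = Nat.card X := by
  simp [mark]

theorem mark_pos_iff [Finite X] {H : Subgroup G} :
    0 < mark G X H ↔ ∃ x : X, H ≤ stabilizer G x := by
  simp only [mark, Nat.card_pos_iff, Set.coe_ofPred, nonempty_subtype, SetLike.le_def,
    mem_stabilizer_iff]
  exact and_iff_left inferInstance

theorem mark_sum [Finite X] [Finite Y] (H : Subgroup G) :
    mark G (X ⊕ Y) H = mark G X H + mark G Y H := by
  rw [mark, Nat.card_congr Equiv.subtypeSum, Nat.card_sum]
  congr 1 <;>
    exact Nat.card_congr (Equiv.subtypeEquivRight fun _ => by simp [Sum.smul_inl, Sum.smul_inr])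

theorem isomorphic_sum_compl (s : SubMulAction G X) : Isomorphic G (s ⊕ ↥sᶜ) X := by
  classical
  refine ⟨Equiv.Set.sumCompl (s : Set X), fun g => ?_⟩
  rintro (x | x) <;> rfl

theorem mark_eq_mark_add_mark_compl [Finite X] (s : SubMulAction G X) (H : Subgroup G) :
    mark G X H = mark G s H + mark G ↥sᶜ H := by
  rw [← (isomorphic_sum_compl s).mark_eq, mark_sum]

variable (G) in
def orbitSubMulAction (x : X) : SubMulAction G X where
  carrier := orbit G x
  smul_mem' g := by
    rintro _ ⟨k, rfl⟩
    exact ⟨g * k, mul_smul g k x⟩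

theorem isomorphic_orbit_of_stabilizer_eq {x : X} {y : Y} (h : stabilizer G x = stabilizer G y) :
    Isomorphic G (orbitSubMulAction G x) (orbitSubMulAction G y) := by
  let e : orbitSubMulAction G x ≃ orbitSubMulAction G y := (orbitEquivQuotientStabilizer G x).trans
    ((Subgroup.quotientEquivOfEq h).trans (orbitEquivQuotientStabilizer G y).symm)
  have he : ∀ k : G, (e ⟨k • x, mem_orbit x k⟩ : Y) = k • y := by
    intro k
    have hk : orbitEquivQuotientStabilizer G x ⟨k • x, mem_orbit x k⟩ = k :=
      (Equiv.eq_symm_apply _).mp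
        (Subtype.ext (orbitEquivQuotientStabilizer_symm_apply G x k).symm)
    change ((orbitEquivQuotientStabilizer G y).symm
      (Subgroup.quotientEquivOfEq h (orbitEquivQuotientStabilizer G x ⟨k • x, _⟩)) : Y) = k • y
    rw [hk, Subgroup.quotientEquivOfEq_mk, orbitEquivQuotientStabilizer_symm_apply]
  refine ⟨e, fun g => ?_⟩
  rintro ⟨_, k, rfl⟩
  have hgk : g • (⟨k • x, mem_orbit x k⟩ : orbitSubMulAction G x) =
      ⟨(g * k) • x, mem_orbit x (g * k)⟩ :=
    Subtype.ext (mul_smul g k x).symm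
  refine Subtype.ext ?_
  simp only [SubMulAction.val_smul]
  rw [hgk, he, he, mul_smul]

theorem exists_stabilizer_eq_of_mark_eq [Finite X] [Finite Y] [Nonempty X]
    (h : ∀ H, mark G X H = mark G Y H) : ∃ (x : X) (y : Y), stabilizer G x = stabilizer G y := by
  obtain ⟨x, -, hmax⟩ := Set.Finite.exists_maximalFor (stabilizer G : X → Subgroup G) Set.univ
    Set.finite_univ Set.univ_nonempty
  obtain ⟨y, hxy⟩ := mark_pos_iff.mp ((h _).symm ▸ mark_pos_iff.mpr ⟨x, le_rfl⟩)
  obtain ⟨x', hyx'⟩ := mark_pos_iff.mp ((h _) ▸ mark_pos_iff.mpr ⟨y, le_rfl⟩)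
  exact ⟨x, y, le_antisymm hxy (hyx'.trans (hmax trivial (hxy.trans hyx')))⟩

theorem isomorphic_of_mark_eq [Finite X] [Finite Y] (h : ∀ H, mark G X H = mark G Y H) :
    Isomorphic G X Y := by
  induction hn : Nat.card X using Nat.strong_induction_on generalizing X Y with
  | _ n ih =>
  rcases isEmpty_or_nonempty X with hX | hX
  · have hY : Nat.card Y = 0 := by rw [← mark_bot (G := G), ← h, mark_bot, Nat.card_of_isEmpty]
    have : IsEmpty Y := (Nat.card_eq_zero.mp hY).resolve_right (not_infinite_iff_finite.mpr ‹_›)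
    exact .of_isEmpty
  obtain ⟨x, y, hxy⟩ := exists_stabilizer_eq_of_mark_eq h
  set s := orbitSubMulAction G x
  set t := orbitSubMulAction G y
  have hst : Isomorphic G s t := isomorphic_orbit_of_stabilizer_eq hxy
  have hcompl : Isomorphic G ↥sᶜ ↥tᶜ := by
    refine ih _ ?_ (fun H => ?_) rfl
    · have : Nonempty s := ⟨⟨x, mem_orbit_self x⟩⟩
      have hs_pos : 0 < Nat.card s := Nat.card_pos
      have hX_split := mark_eq_mark_add_mark_compl s ⊥
      simp only [mark_bot] at hX_split
      omega
    · have hX_split := mark_eq_mark_add_mark_compl s H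
      have hY_split := mark_eq_mark_add_mark_compl t H
      have hst_mark := hst.mark_eq H
      have hXY_mark := h H
      omega
  exact (isomorphic_sum_compl s).symm.trans ((hst.sum hcompl).trans (isomorphic_sum_compl t))

end MulAction

theorem burnside_marks_determine_G_set_general {G X Y : Type*} [Group G]
    [Finite X] [Finite Y] [MulAction G X] [MulAction G Y]
    (h : ∀ H : Subgroup G,
      Nat.card {x : X | ∀ g ∈ H, g • x = x} = Nat.card {y : Y | ∀ g ∈ H, g • y = y}) :
    ∃ e : X ≃ Y, ∀ (g : G) (x : X), e (g • x) = g • e x :=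
  MulAction.isomorphic_of_mark_eq h

theorem burnside_marks_determine_G_set {G X Y : Type*} [Group G] [Finite G]
    [Finite X] [Finite Y] [MulAction G X] [MulAction G Y]
    (h : ∀ H : Subgroup G,
      Nat.card {x : X | ∀ g ∈ H, g • x = x} = Nat.card {y : Y | ∀ g ∈ H, g • y = y}) :
    ∃ e : X ≃ Y, ∀ (g : G) (x : X), e (g • x) = g • e x :=
  burnside_marks_determine_G_set_general h
end
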